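/- (Dwork's Lemma, converse direction) Let p be a prime and ω = f(t) dt/t with f ∈ Z_p[[t]], Res_0 ω = f(0) ∈ Z. If (1/p)ω(t^p) − ω(t) = dh for some h ∈ Z_p[[t]], then ω = dlog q for some q ∈ Z_p((t))^*. -/

import Mathlib

/-!
Put `g = f - f(0)` and let `u = exp(∫ g dt/t)`, the primitive being taken for `δ = t d/dt`;
then `δu = g u` and `u(0) = 1`. The hypothesis `f(t^p) - f(t) = δh` says exactly that
`u(t^p)` and `u(t)^p · E`, with `E = exp(p (h - h(0)))`, solve the same equation
`δy = p g(t^p) y`, hence `u(t^p) = u(t)^p E`. Since `p^n / n! ∈ pℤ_p` for `n ≥ 1`, `E ≡ 1 mod p`.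
Dwork's lemma now gives integrality of `u` degree by degree: if `v` is the truncation of `u`
below degree `M`, the coefficient of `t^M` in `u(t^p) = u^p E` reads
`p u_M ≡ [t^M] (v(t^p) - v^p) mod p`, and `v(t^p) ≡ v^p mod p` because Frobenius is the
identity on `𝔽_p`.
-/

open PowerSeries

/-- The derivation `δ = t d/dt` on formal power series. -/
noncomputable def seriesDelta {R : Type*} [CommRing R] (f : PowerSeries R) : PowerSeries R :=
  PowerSeries.mk fun m => (m : R) * PowerSeries.coeff m f

/-- Substitution `t ↦ t^p` on formal power series. -/
noncomputable def seriesSub {R : Type*} [CommRing R] (p : ℕ) (f : PowerSeries R) : PowerSeries R :=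
  PowerSeries.mk fun m => if p ∣ m then PowerSeries.coeff (m / p) f else 0

namespace PowerSeries

section CommRing

variable {R : Type*} [CommRing R]

theorem coeff_mul_of_X_pow_dvd {w : R⟦X⟧} {M : ℕ} (hw : X ^ M ∣ w) (b : R⟦X⟧) :
    coeff M (w * b) = coeff M w * constantCoeff b := by
  obtain ⟨w, rfl⟩ := hw
  rw [mul_assoc, coeff_X_pow_mul', coeff_X_pow_mul', if_pos le_rfl, if_pos le_rfl, Nat.sub_self,
    coeff_zero_eq_constantCoeff_apply, coeff_zero_eq_constantCoeff_apply, map_mul]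

theorem coeff_pow_mul_sub_coeff_pow_mul {u v : R⟦X⟧} {M : ℕ} (huv : X ^ M ∣ u - v)
    (hu : constantCoeff u = 1) (hv : constantCoeff v = 1) (n : ℕ) (E : R⟦X⟧) :
    coeff M (u ^ n * E) - coeff M (v ^ n * E) = n * coeff M (u - v) * constantCoeff E := by
  rw [← map_sub, ← sub_mul, ← geom_sum₂_mul u v n, mul_comm _ (u - v), mul_assoc,
    coeff_mul_of_X_pow_dvd huv, map_mul, map_sum]
  simp only [map_mul, map_pow, hu, hv, one_pow, mul_one, Finset.sum_const, Finset.card_range,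
    nsmul_eq_mul]
  ring

theorem constantCoeff_exp_subst [Algebra ℚ R] {a : R⟦X⟧} (ha : constantCoeff a = 0) :
    constantCoeff ((exp R).subst a : R⟦X⟧) = 1 := by
  rw [← coeff_zero_eq_constantCoeff_apply, coeff_subst' (HasSubst.of_constantCoeff_zero' ha),
    finsum_eq_single _ 0]
  · simp
  · intro d hd
    rw [coeff_zero_eq_constantCoeff_apply, map_pow, ha, zero_pow hd, smul_zero]

end CommRing

section Ultrametric

variable {K : Type*} [NormedCommRing K] [IsUltrametricDist K]

theorem norm_coeff_mul_le {a b : K⟦X⟧} {A B : ℝ} (ha : ∀ j, ‖coeff j a‖ ≤ A)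
    (hb : ∀ j, ‖coeff j b‖ ≤ B) (m : ℕ) : ‖coeff m (a * b)‖ ≤ A * B := by
  have hA : 0 ≤ A := (norm_nonneg _).trans (ha 0)
  have hB : 0 ≤ B := (norm_nonneg _).trans (hb 0)
  rw [coeff_mul]
  refine IsUltrametricDist.norm_sum_le_of_forall_le_of_nonneg (mul_nonneg hA hB) fun x _ => ?_
  exact (norm_mul_le _ _).trans (mul_le_mul (ha _) (hb _) (norm_nonneg _) hA)

theorem norm_coeff_pow_le_one [NormOneClass K] {a : K⟦X⟧} (ha : ∀ j, ‖coeff j a‖ ≤ 1)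
    (n m : ℕ) : ‖coeff m (a ^ n)‖ ≤ 1 := by
  induction n generalizing m with
  | zero => rw [pow_zero, coeff_one]; split_ifs <;> simp
  | succ n ih =>
    rw [pow_succ, ← mul_one (1 : ℝ)]
    exact norm_coeff_mul_le ih ha m

end Ultrametric

end PowerSeries

section Delta

variable {R : Type*} [CommRing R]

theorem coeff_seriesDelta (f : R⟦X⟧) (m : ℕ) : coeff m (seriesDelta f) = m * coeff m f :=
  coeff_mk _ _

theorem seriesDelta_eq_X_mul_derivative (f : R⟦X⟧) : seriesDelta f = X * d⁄dX R f := by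
  ext (_ | m)
  · simp [coeff_seriesDelta]
  · rw [coeff_seriesDelta, coeff_succ_X_mul, coeff_derivative]
    push_cast
    ring

theorem seriesDelta_mul (a b : R⟦X⟧) :
    seriesDelta (a * b) = seriesDelta a * b + a * seriesDelta b := by
  simp only [seriesDelta_eq_X_mul_derivative, Derivation.leibniz, smul_eq_mul]
  ring

theorem seriesDelta_pow (a : R⟦X⟧) (n : ℕ) :
    seriesDelta (a ^ n) = n * a ^ (n - 1) * seriesDelta a := by
  simp only [seriesDelta_eq_X_mul_derivative, derivative_pow]
  ring

theorem seriesSub_eq_expand {p : ℕ} (hp : p ≠ 0) (f : R⟦X⟧) :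
    seriesSub p f = expand p hp f := by
  ext m
  rw [seriesSub, coeff_mk, coeff_expand]

theorem seriesDelta_expand {p : ℕ} (hp : p ≠ 0) (f : R⟦X⟧) :
    seriesDelta (expand p hp f) = p * expand p hp (seriesDelta f) := by
  ext m
  rw [coeff_seriesDelta, ← map_natCast (C (R := R)), coeff_C_mul, coeff_expand, coeff_expand]
  split_ifs with h
  · obtain ⟨k, rfl⟩ := h
    rw [coeff_seriesDelta, Nat.mul_div_cancel_left _ (Nat.pos_of_ne_zero hp)]
    push_cast
    ring
  · simp

theorem seriesDelta_exp_subst [Algebra ℚ R] {a : R⟦X⟧} (ha : constantCoeff a = 0) :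
    seriesDelta ((exp R).subst a) = (exp R).subst a * seriesDelta a := by
  rw [seriesDelta_eq_X_mul_derivative, seriesDelta_eq_X_mul_derivative,
    derivative_subst (HasSubst.of_constantCoeff_zero' ha), derivative_exp]
  ring

end Delta

section Field

variable {K : Type*} [Field K]

-- The junk value `coeff 0 f / 0 = 0` makes this the `δ`-primitive of `f - f(0)` vanishing at `0`.
noncomputable def deltaPrimitive (f : K⟦X⟧) : K⟦X⟧ :=
  mk fun m => coeff m f / m

theorem constantCoeff_deltaPrimitive (f : K⟦X⟧) : constantCoeff (deltaPrimitive f) = 0 := by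
  rw [← coeff_zero_eq_constantCoeff_apply, deltaPrimitive, coeff_mk, Nat.cast_zero, div_zero]

variable [CharZero K]

theorem seriesDelta_deltaPrimitive (f : K⟦X⟧) :
    seriesDelta (deltaPrimitive f) = f - C (constantCoeff f) := by
  ext (_ | m)
  · simp [coeff_seriesDelta]
  · rw [coeff_seriesDelta, deltaPrimitive, coeff_mk, map_sub, coeff_C, if_neg m.succ_ne_zero,
      sub_zero, mul_div_cancel₀ _ (Nat.cast_ne_zero.mpr m.succ_ne_zero)]

theorem eq_of_seriesDelta_eq_mul {G y z : K⟦X⟧} (hy : seriesDelta y = G * y)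
    (hz : seriesDelta z = G * z) (hz0 : constantCoeff z ≠ 0)
    (h0 : constantCoeff y = constantCoeff z) : y = z := by
  have hdlog : d⁄dX K y * z = y * d⁄dX K z := by
    refine mul_left_cancel₀ (X_ne_zero (R := K)) ?_
    linear_combination (-z) * seriesDelta_eq_X_mul_derivative y +
      y * seriesDelta_eq_X_mul_derivative z + z * hy - y * hz
  have hzz : z * z⁻¹ = 1 := PowerSeries.mul_inv_cancel z hz0
  have hquot : y * z⁻¹ = 1 := by
    refine derivative.ext ?_ ?_
    · rw [Derivation.leibniz, derivative_inv', smul_eq_mul, smul_eq_mul, derivative_one]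
      linear_combination z⁻¹ ^ 2 * hdlog - z⁻¹ * d⁄dX K y * hzz
    · rw [map_mul, constantCoeff_inv, h0, map_one, mul_inv_cancel₀ hz0]
  calc y = y * z⁻¹ * z := by rw [mul_assoc, mul_comm z⁻¹, hzz, mul_one]
    _ = z := by rw [hquot, one_mul]

theorem expand_exp_subst_deltaPrimitive {p : ℕ} (hp : p ≠ 0) {f h : K⟦X⟧}
    (hfh : expand p hp f - f = seriesDelta h) :
    expand p hp ((exp K).subst (deltaPrimitive f)) =
      (exp K).subst (deltaPrimitive f) ^ p *
        (exp K).subst ((p : K) • (h - C (constantCoeff h))) := by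
  set u : K⟦X⟧ := (exp K).subst (deltaPrimitive f)
  set H : K⟦X⟧ := (p : K) • (h - C (constantCoeff h)) with hH
  have hH0 : constantCoeff H = 0 := by simp [H]
  have hu0 : constantCoeff u = 1 := constantCoeff_exp_subst (constantCoeff_deltaPrimitive f)
  have hu : seriesDelta u = u * (f - C (constantCoeff f)) := by
    rw [seriesDelta_exp_subst (constantCoeff_deltaPrimitive f), seriesDelta_deltaPrimitive]
  have hE : seriesDelta ((exp K).subst H) = (exp K).subst H * (p * seriesDelta h) := by
    rw [seriesDelta_exp_subst hH0, seriesDelta_eq_X_mul_derivative,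
      seriesDelta_eq_X_mul_derivative, hH, Derivation.map_smul, map_sub, derivative_C,
      sub_zero]
    simp only [smul_eq_C_mul, map_natCast]
    ring
  refine eq_of_seriesDelta_eq_mul (G := (p : K⟦X⟧) * expand p hp (f - C (constantCoeff f)))
    ?_ ?_ ?_ ?_
  · rw [seriesDelta_expand, hu, map_mul]
    ring
  · rw [seriesDelta_mul, seriesDelta_pow, hu, hE, map_sub, expand_C, sub_eq_iff_eq_add.mp hfh]
    linear_combination
      (p : K⟦X⟧) * (exp K).subst H * (f - C (constantCoeff f)) * pow_sub_one_mul hp u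
  · simp [hu0, constantCoeff_exp_subst hH0]
  · simp [hu0, constantCoeff_exp_subst hH0]

end Field

section Padic

variable {p : ℕ} [hp : Fact p.Prime]

theorem Padic.norm_p_pow_div_factorial_le {d : ℕ} (hd : d ≠ 0) :
    ‖(p : ℚ_[p]) ^ d / (d.factorial : ℚ_[p])‖ ≤ (p : ℝ)⁻¹ := by
  have hv := padicValNat_factorial_lt_of_ne_zero p hd
  have hp1 : (1 : ℝ) ≤ p := by exact_mod_cast hp.out.one_le
  rw [norm_div, Padic.norm_p_pow,
    Padic.norm_eq_zpow_neg_valuation (Nat.cast_ne_zero.mpr d.factorial_ne_zero),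
    Padic.valuation_natCast, ← zpow_sub₀ (by positivity), ← zpow_neg_one]
  exact zpow_le_zpow_right₀ hp1 (by omega)

theorem PowerSeries.norm_coeff_exp_subst_smul_sub_one_le {H : ℚ_[p]⟦X⟧}
    (hH0 : constantCoeff H = 0) (hH : ∀ j, ‖coeff j H‖ ≤ 1) (m : ℕ) :
    ‖coeff m ((exp ℚ_[p]).subst ((p : ℚ_[p]) • H) - 1 : ℚ_[p]⟦X⟧)‖ ≤ (p : ℝ)⁻¹ := by
  have ha : constantCoeff ((p : ℚ_[p]) • H) = 0 := by simp [hH0]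
  have hsubst := HasSubst.of_constantCoeff_zero' ha
  rcases m with _ | m
  · rw [coeff_zero_eq_constantCoeff_apply, map_sub, constantCoeff_exp_subst ha, map_one,
      sub_self, norm_zero]
    positivity
  rw [map_sub, coeff_one, if_neg m.succ_ne_zero, sub_zero, coeff_subst' hsubst,
    finsum_eq_sum _ (coeff_subst_finite' hsubst _ _)]
  refine IsUltrametricDist.norm_sum_le_of_forall_le_of_nonneg (by positivity) fun d _ => ?_
  rcases eq_or_ne d 0 with rfl | hd
  · simp
  rw [coeff_exp, smul_pow, coeff_smul, smul_eq_mul, smul_eq_mul, map_div₀, map_one, map_natCast,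
    ← mul_assoc, one_div_mul_eq_div, norm_mul, ← mul_one (p : ℝ)⁻¹]
  exact mul_le_mul (Padic.norm_p_pow_div_factorial_le hd) (norm_coeff_pow_le_one hH d _)
    (norm_nonneg _) (by positivity)

theorem PowerSeries.norm_coeff_expand_sub_pow_le {v : ℚ_[p]⟦X⟧} (hv : ∀ j, ‖coeff j v‖ ≤ 1)
    (m : ℕ) : ‖coeff m (expand p hp.out.ne_zero v - v ^ p)‖ ≤ (p : ℝ)⁻¹ := by
  obtain ⟨V, hV⟩ : ∃ V : ℤ_[p]⟦X⟧, map PadicInt.Coe.ringHom V = v :=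
    ⟨mk fun j => ⟨coeff j v, hv j⟩,
      ext fun j => (coeff_map _ _ _).trans (congrArg _ (coeff_mk _ _))⟩
  set x := coeff m (expand p hp.out.ne_zero V - V ^ p)
  have hx : (x : ℚ_[p]) = coeff m (expand p hp.out.ne_zero v - v ^ p) := by
    rw [← hV, ← map_expand, ← map_pow, ← map_sub, coeff_map]; rfl
  have hfrob : expand p hp.out.ne_zero (map PadicInt.toZMod V) = map PadicInt.toZMod V ^ p := by
    have := MvPowerSeries.map_frobenius_expand p hp.out.ne_zero (f := map PadicInt.toZMod V)
    rwa [ZMod.frobenius_zmod, MvPowerSeries.map_id] at this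
  have hx0 : PadicInt.toZMod x = 0 := by
    rw [← coeff_map, map_sub, map_pow, map_expand, hfrob, sub_self, map_zero]
  have hxp : x ∈ IsLocalRing.maximalIdeal ℤ_[p] := by
    rw [← PadicInt.ker_toZMod]; exact hx0
  rw [← hx, ← PadicInt.norm_def, ← zpow_neg_one]
  exact (PadicInt.norm_le_pow_iff_norm_lt_pow_add_one x (-1)).mpr
    (by simpa using PadicInt.mem_nonunits.mp hxp)

theorem norm_coeff_le_one_of_expand_eq_pow_mul {u E : ℚ_[p]⟦X⟧} (hu : constantCoeff u = 1)
    (hE : ∀ j, ‖coeff j (E - 1)‖ ≤ (p : ℝ)⁻¹) (h : expand p hp.out.ne_zero u = u ^ p * E)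
    (M : ℕ) : ‖coeff M u‖ ≤ 1 := by
  have hE0 : constantCoeff E = 1 := by simpa [hu] using (congrArg constantCoeff h).symm
  induction M using Nat.strong_induction_on with | _ M ih =>
  rcases eq_or_ne M 0 with rfl | hM
  · simp [hu]
  set v : ℚ_[p]⟦X⟧ := ((trunc M u : Polynomial ℚ_[p]) : ℚ_[p]⟦X⟧)
  have hv : ∀ j, ‖coeff j v‖ ≤ 1 := fun j => by
    rw [Polynomial.coeff_coe, coeff_trunc]
    split_ifs with hj
    exacts [ih j hj, by simp]
  have hv0 : constantCoeff v = 1 := by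
    rw [← coeff_zero_eq_constantCoeff_apply, coeff_coe_trunc_of_lt (Nat.pos_of_ne_zero hM),
      coeff_zero_eq_constantCoeff_apply, hu]
  have hvM : coeff M v = 0 := by rw [Polynomial.coeff_coe, coeff_trunc, if_neg (lt_irrefl M)]
  have huv : X ^ M ∣ u - v := X_pow_dvd_iff.mpr fun j hj => by
    rw [map_sub, coeff_coe_trunc_of_lt hj, sub_self]
  have hexpand : coeff M (expand p hp.out.ne_zero u) = coeff M (expand p hp.out.ne_zero v) := by
    obtain ⟨w, hw⟩ := huv
    have hdvd : X ^ (p * M) ∣ expand p hp.out.ne_zero (u - v) := ⟨expand p hp.out.ne_zero w, by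
      rw [hw, map_mul, map_pow, expand_X, pow_mul]⟩
    rw [← sub_eq_zero, ← map_sub, ← map_sub]
    exact X_pow_dvd_iff.mp hdvd M (lt_mul_left (Nat.pos_of_ne_zero hM) hp.out.one_lt)
  have hkey : (p : ℚ_[p]) * coeff M u =
      coeff M (expand p hp.out.ne_zero v - v ^ p) - coeff M (v ^ p * (E - 1)) := by
    have hfirst := coeff_pow_mul_sub_coeff_pow_mul huv hu hv0 p E
    rw [map_sub, hvM, sub_zero, hE0, mul_one] at hfirst
    rw [map_sub, mul_sub, mul_one, map_sub, ← hexpand, h]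
    linear_combination -hfirst
  have hbound : ‖(p : ℚ_[p]) * coeff M u‖ ≤ (p : ℝ)⁻¹ := by
    rw [hkey, sub_eq_add_neg]
    refine (IsUltrametricDist.norm_add_le_max _ _).trans
      (max_le (norm_coeff_expand_sub_pow_le hv M) ?_)
    simpa using norm_coeff_mul_le (norm_coeff_pow_le_one hv p) hE M
  rw [norm_mul, Padic.norm_p] at hbound
  exact le_of_mul_le_mul_left (by simpa using hbound)
    (inv_pos.mpr (by exact_mod_cast hp.out.pos))

end Padic

theorem stmt3_general (p : ℕ) [Fact p.Prime] (f : PowerSeries ℚ_[p]) (n0 : ℤ)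
    (hres : PowerSeries.constantCoeff f = (n0 : ℚ_[p]))
    (h : ∃ hh : PowerSeries ℚ_[p], (∀ m : ℕ, ‖PowerSeries.coeff m hh‖ ≤ 1) ∧
      seriesSub p f - f = seriesDelta hh) :
    ∃ u : PowerSeries ℚ_[p], PowerSeries.constantCoeff u = 1 ∧
      (∀ m : ℕ, ‖PowerSeries.coeff m u‖ ≤ 1) ∧
      seriesDelta u = (f - (n0 : PowerSeries ℚ_[p])) * u := by
  obtain ⟨hh, hh_int, hsub⟩ := h
  have hp0 : p ≠ 0 := (Fact.out : p.Prime).ne_zero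
  rw [seriesSub_eq_expand hp0] at hsub
  have hu0 := constantCoeff_exp_subst (constantCoeff_deltaPrimitive f)
  have hH : ∀ j, ‖coeff j (hh - C (constantCoeff hh))‖ ≤ 1 := fun j => by
    rw [map_sub, coeff_C]
    split_ifs with hj
    · simp [hj]
    · simpa using hh_int j
  refine ⟨_, hu0, norm_coeff_le_one_of_expand_eq_pow_mul hu0
    (norm_coeff_exp_subst_smul_sub_one_le (by simp) hH) (expand_exp_subst_deltaPrimitive hp0 hsub),
    ?_⟩
  rw [seriesDelta_exp_subst (constantCoeff_deltaPrimitive f), seriesDelta_deltaPrimitive, hres,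
    map_intCast, mul_comm]

/-- Dwork's Lemma, converse direction.  Let `ω = f dt/t` with `f ∈ ℤ_p[[t]]` whose residue
`f(0)` is an integer `n₀`.  If `(1/p)ω(t^p) − ω(t) = dh` for some `h ∈ ℤ_p[[t]]`
(equivalently `f(t^p) − f(t) = δ(h)`), then `ω = dlog q` for some `q ∈ ℤ_p((t))^*`:
there is `u ∈ 1 + t ℤ_p[[t]]` with `δ(u) = (f − n₀) u`, i.e. `q = c t^{n₀} u` satisfies
`t q'/q = f`. -/
theorem stmt3 (p : ℕ) [Fact p.Prime] (f : PowerSeries ℚ_[p]) (n0 : ℤ)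
    (hint : ∀ m : ℕ, ‖PowerSeries.coeff m f‖ ≤ 1)
    (hres : PowerSeries.constantCoeff f = (n0 : ℚ_[p]))
    (h : ∃ hh : PowerSeries ℚ_[p], (∀ m : ℕ, ‖PowerSeries.coeff m hh‖ ≤ 1) ∧
      seriesSub p f - f = seriesDelta hh) :
    ∃ u : PowerSeries ℚ_[p], PowerSeries.constantCoeff u = 1 ∧
      (∀ m : ℕ, ‖PowerSeries.coeff m u‖ ≤ 1) ∧
      seriesDelta u = (f - (n0 : PowerSeries ℚ_[p])) * u :=
  stmt3_general p f n0 hres h
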